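/- arXiv:1812.01423 — 2 statements merged into one kernel-verified Lean document; each statement's English description precedes it below -/
import Mathlib

section
/- Every 2×2 real symplectic matrix admits an Euler decomposition: if S · Ω · Sᵀ = Ω with Ω = [[0, 1], [−1, 0]], then there exist real numbers θ, r, φ such that S = O(θ) · T(r) · O(φ), where O(·) is the rotation matrix [[cos θ, sin θ], [−sin θ, cos θ]] and T(r) = diag(e^{−r}, e^{r}). -/
open Real Matrix

/-- Rotation matrix `O(θ)`. -/
noncomputable def rotO (θ : ℝ) : Matrix (Fin 2) (Fin 2) ℝ :=
  !![Real.cos θ, Real.sin θ; -Real.sin θ, Real.cos θ]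

/-- Squeezing matrix `T(r) = diag(e^{-r}, e^{r})`. -/
noncomputable def sqT (r : ℝ) : Matrix (Fin 2) (Fin 2) ℝ :=
  !![Real.exp (-r), 0; 0, Real.exp r]

/-!
Writing `e^{∓r} = cosh r ∓ sinh r`, the product `O(θ) T(r) O(φ)` is
`[[ch·cos ψ - sh·cos δ, ch·sin ψ + sh·sin δ], [-ch·sin ψ + sh·sin δ, ch·cos ψ + sh·cos δ]]`
with `ψ = θ + φ`, `δ = θ - φ`. So for `S = [[a, b], [c, d]]` it suffices to write
`z = ((a + d) + i(b - c))/2` and `w = ((d - a) + i(b + c))/2` in polar form with moduli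
`cosh r` and `sinh r`. This is possible exactly when `|z|² - |w|² = ad - bc = 1`, and in dimension
two the symplectic condition `S Ω Sᵀ = Ω` says precisely `det S = 1`.
-/

lemma mul_symplecticForm_mul_transpose {R : Type*} [CommRing R] (S : Matrix (Fin 2) (Fin 2) R) :
    S * !![0, 1; -1, 0] * Sᵀ = S.det • !![0, 1; -1, 0] := by
  rw [det_fin_two]
  ext i j
  fin_cases i <;> fin_cases j <;> simp [mul_apply, Fin.sum_univ_succ] <;> ring

lemma rotO_mul_sqT_mul_rotO (θ r φ : ℝ) :
    rotO θ * sqT r * rotO φ =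
      !![cosh r * cos (θ + φ) - sinh r * cos (θ - φ), cosh r * sin (θ + φ) + sinh r * sin (θ - φ);
        -(cosh r * sin (θ + φ)) + sinh r * sin (θ - φ),
          cosh r * cos (θ + φ) + sinh r * cos (θ - φ)] := by
  rw [rotO, rotO, sqT, mul_fin_two, mul_fin_two, cos_add, sin_add, cos_sub, sin_sub,
    ← cosh_sub_sinh, ← cosh_add_sinh]
  simp only [EmbeddingLike.apply_eq_iff_eq, vecCons_inj, and_true]
  refine ⟨⟨?_, ?_⟩, ?_, ?_⟩ <;> ring

lemma exists_cosh_sinh_eq {x y : ℝ} (hx : 0 ≤ x) (h : x ^ 2 - y ^ 2 = 1) :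
    ∃ r, cosh r = x ∧ sinh r = y :=
  ⟨arsinh y, by rw [cosh_arsinh, ← sqrt_sq hx]; congr 1; linarith, sinh_arsinh y⟩

theorem exists_rotO_mul_sqT_mul_rotO_of_det_eq_one {S : Matrix (Fin 2) (Fin 2) ℝ}
    (hS : S.det = 1) : ∃ θ r φ : ℝ, S = rotO θ * sqT r * rotO φ := by
  set z : ℂ := ⟨(S 0 0 + S 1 1) / 2, (S 0 1 - S 1 0) / 2⟩
  set w : ℂ := ⟨(S 1 1 - S 0 0) / 2, (S 0 1 + S 1 0) / 2⟩
  have hzw : ‖z‖ ^ 2 - ‖w‖ ^ 2 = 1 := by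
    rw [Complex.sq_norm, Complex.sq_norm, Complex.normSq_mk, Complex.normSq_mk]
    rw [det_fin_two] at hS
    linear_combination hS
  obtain ⟨r, hcosh, hsinh⟩ := exists_cosh_sinh_eq (norm_nonneg z) hzw
  refine ⟨(z.arg + w.arg) / 2, r, (z.arg - w.arg) / 2, ?_⟩
  rw [rotO_mul_sqT_mul_rotO, show (z.arg + w.arg) / 2 + (z.arg - w.arg) / 2 = z.arg by ring,
    show (z.arg + w.arg) / 2 - (z.arg - w.arg) / 2 = w.arg by ring, hcosh, hsinh,
    Complex.norm_mul_cos_arg, Complex.norm_mul_sin_arg, Complex.norm_mul_cos_arg,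
    Complex.norm_mul_sin_arg]
  conv_lhs => rw [S.eta_fin_two]
  simp only [z, w, EmbeddingLike.apply_eq_iff_eq, vecCons_inj, and_true]
  refine ⟨⟨?_, ?_⟩, ?_, ?_⟩ <;> ring

theorem euler_decomposition (S : Matrix (Fin 2) (Fin 2) ℝ)
    (hS : S * !![0, 1; -1, 0] * Sᵀ = !![(0 : ℝ), 1; -1, 0]) :
    ∃ θ r φ : ℝ, S = rotO θ * sqT r * rotO φ := by
  refine exists_rotO_mul_sqT_mul_rotO_of_det_eq_one ?_
  have h01 := congrFun (congrFun hS 0) 1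
  rw [mul_symplecticForm_mul_transpose] at h01
  simpa using h01
end

section
/- For every λ ∈ [0, 1] and every x ≥ 0, λ·g(x) ≤ g(λ·x), where g(x) = (1+x)·log(1+x) − x·log(x) with g(0) = 0. Consequently, for all N̄, N̄_E ≥ 0 and τ ∈ [0, 1], the Holevo capacity of the thermal-noise channel is bounded by the Smith–König upper bound: g(τN̄+(1−τ)N̄_E) − g((1−τ)N̄_E) ≤ g(τN̄+(1−τ)N̄_E) − (1−τ)·g(N̄_E). -/
/-!
For `0 < λ` and `0 < x`, the defect `g(λx) - λ g(x)` splits as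
`(log(1 + λx) - λ log(1 + x)) + λx (log(1 + λx) - log(λ(1 + x)))`.
The first bracket is nonnegative by Bernoulli's inequality `(1 + x)^λ ≤ 1 + λx`, the second
because `λ(1 + x) ≤ 1 + λx`. The Smith–König comparison is the case `λ = 1 - τ`, `x = N̄_E`.
-/

open Real

/-- The entropic function `g(x) = (1+x) log(1+x) - x log x` (with `g 0 = 0`,
since `Real.log 0 = 0` in Mathlib). -/
noncomputable def gEnt (x : ℝ) : ℝ := (1 + x) * Real.log (1 + x) - x * Real.log x

lemma mul_log_one_add_le_log_one_add_mul {lam x : ℝ} (h0 : 0 ≤ lam) (h1 : lam ≤ 1)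
    (hx : -1 < x) : lam * log (1 + x) ≤ log (1 + lam * x) := by
  have h1x : 0 < 1 + x := by linarith
  calc lam * log (1 + x) = log ((1 + x) ^ lam) := (log_rpow h1x lam).symm
    _ ≤ log (1 + lam * x) :=
      log_le_log (by positivity) (rpow_one_add_le_one_add_mul_self hx.le h0 h1)

lemma gEnt_mul_sub_mul_gEnt {lam x : ℝ} (hlam : 0 < lam) (hx : 0 < x) :
    gEnt (lam * x) - lam * gEnt x =
      (log (1 + lam * x) - lam * log (1 + x)) +
        lam * x * (log (1 + lam * x) - log (lam * (1 + x))) := by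
  unfold gEnt
  rw [log_mul hlam.ne' hx.ne', log_mul hlam.ne' (by positivity)]
  ring

lemma mul_gEnt_le_gEnt_mul {lam x : ℝ} (h0 : 0 ≤ lam) (h1 : lam ≤ 1) (hx : 0 ≤ x) :
    lam * gEnt x ≤ gEnt (lam * x) := by
  rcases h0.eq_or_lt with rfl | hlam
  · simp [gEnt]
  rcases hx.eq_or_lt with rfl | hxpos
  · simp [gEnt]
  have hconcave : 0 ≤ log (1 + lam * x) - lam * log (1 + x) :=
    sub_nonneg.2 (mul_log_one_add_le_log_one_add_mul h0 h1 (by linarith))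
  have hmono : 0 ≤ log (1 + lam * x) - log (lam * (1 + x)) :=
    sub_nonneg.2 (log_le_log (by positivity) (by nlinarith))
  rw [← sub_nonneg, gEnt_mul_sub_mul_gEnt hlam hxpos]
  positivity

theorem gEnt_superhomogeneous_and_holevo_le_smith_koenig :
    (∀ lam x : ℝ, 0 ≤ lam → lam ≤ 1 → 0 ≤ x → lam * gEnt x ≤ gEnt (lam * x)) ∧
      (∀ Nbar NE τ : ℝ, 0 ≤ Nbar → 0 ≤ NE → 0 ≤ τ → τ ≤ 1 →
        gEnt (τ * Nbar + (1 - τ) * NE) - gEnt ((1 - τ) * NE) ≤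
          gEnt (τ * Nbar + (1 - τ) * NE) - (1 - τ) * gEnt NE) :=
  ⟨fun _ _ h0 h1 hx => mul_gEnt_le_gEnt_mul h0 h1 hx, fun _ _ _ _ hNE hτ hτ1 =>
    sub_le_sub_left (mul_gEnt_le_gEnt_mul (by linarith) (by linarith) hNE) _⟩
end
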